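/- Let k ≥ 1, let m₁,…,m_{2k} be positive integers with m₁ ≥ 2, and let G = Γ(m₁,…,m_{2k}) with Laplacian L. Then for every t ∈ ℝ, exp(−itL) = e^{−itλ₀(1)}·P₁ + Σ_{j=2}^{2k} e^{−itλ(j)}·P_j + (1/n)·J, where: λ₀(1) = m₂+m₄+⋯+m_{2k}; P₁ is the n×n matrix whose top-left m₁×m₁ block equals I − (1/m₁)J and which is zero elsewhere; for 2 ≤ j ≤ 2k, λ(j) = λ₀(j) = m_{j+1}+m_{j+3}+⋯+m_{2k} if j is odd and λ(j) = λ₁(j) = σ_j + m_{j+2}+⋯+m_{2k} if j is even, and P_j is the matrix with entries (P_j)_{ab} = m_j/(σ_{j−1}σ_j) if a,b ∈ B₁ ∪ ⋯ ∪ B_{j−1}, (P_j)_{ab} = −1/σ_j if exactly one of a,b lies in B₁ ∪ ⋯ ∪ B_{j−1} and the other in B_j, (P_j)_{ab} = δ_{ab} − 1/σ_j if a,b ∈ B_j, and 0 otherwise; and J is the n×n all-ones matrix. -/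

import Mathlib

/-!
Let `U_j = B₁ ∪ ⋯ ∪ B_j`, let `D_j` be the diagonal indicator of `B_j` and `Q_j` the averaging
projection onto the vectors constant on `U_j` and zero off it (`Q_0 = 0`). Then
`P_j = D_j - Q_j + Q_{j-1}`, so `∑_{j ≤ 2k} P_j` telescopes to `1 - Q_{2k} = 1 - J/n`.

Every column of `P_j` is supported on `U_j`, constant on `U_{j-1}` and sums to zero. Two distinct
vertices are adjacent iff the larger of their block indices is even, so on such a vector the
Laplacian acts as multiplication by `λ(j) = #{v | max(j, block v) is even}`. Hence
`L P_j = λ(j) P_j` and `L J = 0`, and multiplying `exp(-itL)` by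
`1 = ∑_j P_j + J/n` gives the formula.
-/

open Finset Matrix

/-- `sig m l = m 1 + ⋯ + m l` (block sizes `m` are indexed starting from 1). -/
def sig (m : ℕ → ℕ) (l : ℕ) : ℕ := ∑ i ∈ Finset.Icc 1 l, m i

/-- The (1-based) index of the block containing the (0-based) vertex `v`:
`blk r m v = b` iff `sig m (b-1) ≤ v < sig m b`. -/
def blk (r : ℕ) (m : ℕ → ℕ) (v : ℕ) : ℕ :=
  1 + ((Finset.Icc 1 r).filter (fun l => sig m l ≤ v)).card

/-- `Γ(m₁,…,m_r) = ((((O_{m₁} ∨ K_{m₂}) ∪ O_{m₃}) ∨ K_{m₄}) ⋯ )`: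
the odd-indexed blocks are added as sets of isolated vertices (disjoint union with `O_{m_l}`)
and the even-indexed blocks are cliques joined to everything already present.  Hence two
distinct vertices are adjacent iff the larger of their two block indices is even.  Vertices
are labelled `0,…,n-1` (`n = m₁+⋯+m_r`), block `B₁` first, then `B₂`, etc. -/
def GammaEven (r : ℕ) (m : ℕ → ℕ) : SimpleGraph (Fin (sig m r)) where
  Adj u v := u ≠ v ∧ (max (blk r m (u : ℕ)) (blk r m (v : ℕ))) % 2 = 0
  symm := by
    constructor
    intro u v h
    exact ⟨h.1.symm, by rw [max_comm]; exact h.2⟩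
  loopless := by constructor; intro u h; exact h.1 rfl

instance (r : ℕ) (m : ℕ → ℕ) : DecidableRel (GammaEven r m).Adj := fun u v =>
  decidable_of_iff (u ≠ v ∧ (max (blk r m (u : ℕ)) (blk r m (v : ℕ))) % 2 = 0) Iff.rfl

/-- `U_t = exp(−itL)`, where `L` is the Laplacian matrix of `G` (diagonal entries the
degrees, entry `−1` for each edge, `0` otherwise). -/
noncomputable def Ut {n : ℕ} (G : SimpleGraph (Fin n)) [DecidableRel G.Adj] (t : ℝ) :
    Matrix (Fin n) (Fin n) ℂ :=
  NormedSpace.exp ((-(Complex.I * (t : ℂ))) • G.lapMatrix ℂ)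

/-- The transfer probability `p_G(i,j,t) = |(U_t)_{j,i}|²`. -/
noncomputable def transferProb {n : ℕ} (G : SimpleGraph (Fin n)) [DecidableRel G.Adj]
    (i j : Fin n) (t : ℝ) : ℝ :=
  ‖Ut G t j i‖ ^ 2

/-- `λ₀(j) = m_{j+1} + m_{j+3} + ⋯ + m_{2k}` (the indices run over `j+1, j+3, …`). -/
def lam0 (k : ℕ) (m : ℕ → ℕ) (j : ℕ) : ℕ :=
  ∑ l ∈ (Finset.Icc (j + 1) (2 * k)).filter (fun l => (l - j) % 2 = 1), m l

/-- `λ₁(j) = σ_j + m_{j+2} + m_{j+4} + ⋯ + m_{2k}` (the sum runs over `j+2, j+4, …`). -/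
def lam1 (k : ℕ) (m : ℕ → ℕ) (j : ℕ) : ℕ :=
  sig m j + ∑ l ∈ (Finset.Icc (j + 2) (2 * k)).filter (fun l => (l - j) % 2 = 0), m l

/-- `λ(j)`: `λ₀(j)` for odd `j`, `λ₁(j)` for even `j`. -/
def lam (k : ℕ) (m : ℕ → ℕ) (j : ℕ) : ℕ :=
  if Odd j then lam0 k m j else lam1 k m j

/-- `P₁`: the matrix whose top-left `m₁ × m₁` block (rows and columns in `B₁`) equals
`I − (1/m₁)J`, and which is zero elsewhere. -/
noncomputable def projOne (k : ℕ) (m : ℕ → ℕ) :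
    Matrix (Fin (sig m (2 * k))) (Fin (sig m (2 * k))) ℂ :=
  Matrix.of fun a b =>
    if blk (2 * k) m (a : ℕ) = 1 ∧ blk (2 * k) m (b : ℕ) = 1 then
      (if a = b then 1 else 0) - 1 / (m 1 : ℂ)
    else 0

/-- `P_j` (`2 ≤ j ≤ 2k`): entries `m_j/(σ_{j−1}σ_j)` on `(B₁∪⋯∪B_{j−1}) × (B₁∪⋯∪B_{j−1})`,
`−1/σ_j` between `B₁∪⋯∪B_{j−1}` and `B_j`, `δ_{ab} − 1/σ_j` on `B_j × B_j`, `0` elsewhere. -/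
noncomputable def projMat (k : ℕ) (m : ℕ → ℕ) (j : ℕ) :
    Matrix (Fin (sig m (2 * k))) (Fin (sig m (2 * k))) ℂ :=
  Matrix.of fun a b =>
    if blk (2 * k) m (a : ℕ) < j ∧ blk (2 * k) m (b : ℕ) < j then
      (m j : ℂ) / ((sig m (j - 1) : ℂ) * (sig m j : ℂ))
    else if (blk (2 * k) m (a : ℕ) < j ∧ blk (2 * k) m (b : ℕ) = j) ∨
            (blk (2 * k) m (a : ℕ) = j ∧ blk (2 * k) m (b : ℕ) < j) then
      -(1 / (sig m j : ℂ))
    else if blk (2 * k) m (a : ℕ) = j ∧ blk (2 * k) m (b : ℕ) = j then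
      (if a = b then 1 else 0) - 1 / (sig m j : ℂ)
    else 0

namespace NormedSpace

theorem exp_mul_of_mul_eq_smul {𝕂 𝔸 : Type*} [RCLike 𝕂] [NormedRing 𝔸] [NormedAlgebra 𝕂 𝔸]
    [CompleteSpace 𝔸] {a b : 𝔸} {μ : 𝕂} (h : a * b = μ • b) : exp a * b = exp μ • b := by
  have hpow (n : ℕ) : a ^ n * b = μ ^ n • b := by
    induction n with
    | zero => simp
    | succ n ih => rw [pow_succ', mul_assoc, ih, mul_smul_comm, h, smul_smul, pow_succ]
  have hseries := (exp_series_hasSum_exp' (𝕂 := 𝕂) a).mul_right b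
  simp_rw [smul_mul_assoc, hpow, smul_smul] at hseries
  exact hseries.unique ((exp_series_hasSum_exp' (𝕂 := 𝕂) μ).smul_const b)

end NormedSpace

namespace SimpleGraph

variable {V R : Type*} [Fintype V] [DecidableEq V] [NonAssocRing R]

theorem lapMatrix_mulVec_apply_of_adj_iff {G : SimpleGraph V} [DecidableRel G.Adj]
    {r : V → V → Prop} [DecidableRel r] (hG : ∀ u v, G.Adj u v ↔ u ≠ v ∧ r u v)
    (x : V → R) (a : V) :
    (G.lapMatrix R *ᵥ x) a = ∑ v with r a v, (x a - x v) := by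
  rw [lapMatrix_mulVec_apply, ← card_neighborFinset_eq_degree, ← nsmul_eq_mul, ← sum_const,
    ← sum_sub_distrib, neighborFinset_eq_filter, sum_filter, sum_filter]
  refine sum_congr rfl fun v _ => ?_
  by_cases hv : a = v
  · simp [hv]
  · simp [hG, hv]

end SimpleGraph

section BlockIdentity

variable {V 𝕜 : Type*} [DecidableEq V] [Field 𝕜] (β : V → ℕ)

def blockIdentity (j : ℕ) : Matrix V V 𝕜 := diagonal fun v => if β v = j then 1 else 0

theorem sum_blockIdentity {r : ℕ} (hβ : ∀ v, β v ∈ Icc 1 r) :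
    ∑ j ∈ Icc 1 r, blockIdentity (𝕜 := 𝕜) β j = 1 := by
  ext a b
  by_cases hab : a = b
  · simp [blockIdentity, Matrix.sum_apply, hab, hβ b, one_apply]
  · simp [blockIdentity, Matrix.sum_apply, hab]

end BlockIdentity

section BlockProjection

variable {V 𝕜 : Type*} [Fintype V] [Field 𝕜] (β : V → ℕ)

def prefixMean (i : ℕ) : Matrix V V 𝕜 :=
  of fun a b => if β a ≤ i ∧ β b ≤ i then (#{v | β v ≤ i} : 𝕜)⁻¹ else 0

theorem sum_prefixMean_apply [CharZero 𝕜] (i : ℕ) (b : V) :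
    ∑ a, prefixMean (𝕜 := 𝕜) β i a b = if β b ≤ i then 1 else 0 := by
  by_cases hb : β b ≤ i
  · have hcard : (#{v | β v ≤ i} : 𝕜) ≠ 0 := by
      exact_mod_cast (card_pos.mpr ⟨b, by simp [hb]⟩).ne'
    simp [prefixMean, hb, ← sum_filter, hcard]
  · simp [prefixMean, hb]

theorem prefixMean_zero_of_pos (hβ : ∀ v, 0 < β v) : prefixMean (𝕜 := 𝕜) β 0 = 0 := by
  ext a b
  simp [prefixMean, (hβ a).ne']

theorem prefixMean_of_forall_le {r : ℕ} (hβ : ∀ v, β v ≤ r) :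
    prefixMean (𝕜 := 𝕜) β r = (Fintype.card V : 𝕜)⁻¹ • of fun _ _ => 1 := by
  ext a b
  simp [prefixMean, hβ]

variable [DecidableEq V]

def blockProj (j : ℕ) : Matrix V V 𝕜 :=
  blockIdentity β j - prefixMean β j + prefixMean β (j - 1)

theorem blockProj_apply (j : ℕ) (a b : V) :
    blockProj (𝕜 := 𝕜) β j a b = (if a = b ∧ β a = j then 1 else 0)
      - (if β a ≤ j ∧ β b ≤ j then (#{v | β v ≤ j} : 𝕜)⁻¹ else 0)
      + (if β a ≤ j - 1 ∧ β b ≤ j - 1 then (#{v | β v ≤ j - 1} : 𝕜)⁻¹ else 0) := by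
  simp [blockProj, blockIdentity, prefixMean, diagonal_apply, ite_and]

theorem sum_blockProj_apply [CharZero 𝕜] {j : ℕ} (hj : 1 ≤ j) (b : V) :
    ∑ a, blockProj (𝕜 := 𝕜) β j a b = 0 := by
  simp only [blockProj, Matrix.add_apply, Matrix.sub_apply, sum_add_distrib, sum_sub_distrib,
    sum_prefixMean_apply, blockIdentity, diagonal_apply, sum_ite_eq', mem_univ, if_true]
  rcases lt_trichotomy (β b) j with hb | hb | hb
  · simp [hb.ne, hb.le, Nat.le_sub_one_of_lt hb]
  · simp [hb]
    omega
  · simp [hb.ne', hb.not_ge, show ¬ β b ≤ j - 1 by omega]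

theorem blockProj_apply_eq_zero_of_lt {j : ℕ} {a : V} (ha : j < β a) (b : V) :
    blockProj (𝕜 := 𝕜) β j a b = 0 := by
  simp [blockProj_apply, ha.ne', ha.not_ge, show ¬ β a ≤ j - 1 by omega]

theorem blockProj_apply_eq_of_lt {j : ℕ} {a a' : V} (ha : β a < j) (ha' : β a' < j) (b : V) :
    blockProj (𝕜 := 𝕜) β j a b = blockProj β j a' b := by
  simp [blockProj_apply, ha.ne, ha'.ne, ha.le, ha'.le, Nat.le_sub_one_of_lt ha,
    Nat.le_sub_one_of_lt ha']

theorem sum_Icc_blockProj (r : ℕ) :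
    ∑ j ∈ Icc 1 r, blockProj (𝕜 := 𝕜) β j
      = ∑ j ∈ Icc 1 r, blockIdentity β j - prefixMean β r + prefixMean β 0 := by
  induction r with
  | zero => simp
  | succ r ih =>
    rw [sum_Icc_succ_top (by omega), ih, sum_Icc_succ_top (by omega), blockProj,
      add_tsub_cancel_right]
    abel

theorem sum_blockProj_add_smul_ones {r : ℕ} (hβ : ∀ v, β v ∈ Icc 1 r) :
    ∑ j ∈ Icc 1 r, blockProj (𝕜 := 𝕜) β j + (Fintype.card V : 𝕜)⁻¹ • of (fun _ _ => 1) = 1 := by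
  rw [sum_Icc_blockProj, sum_blockIdentity β hβ,
    prefixMean_zero_of_pos β fun v => (mem_Icc.1 (hβ v)).1,
    prefixMean_of_forall_le β fun v => (mem_Icc.1 (hβ v)).2]
  abel

end BlockProjection

section Spectral

variable {V : Type*} [Fintype V] [DecidableEq V] {β : V → ℕ} {G : SimpleGraph V}
  [DecidableRel G.Adj]

theorem lapMatrix_mulVec_eq_smul_of_blockwise {R : Type*} [CommRing R]
    (hG : ∀ u v, G.Adj u v ↔ u ≠ v ∧ Even (max (β u) (β v))) {j : ℕ} {x : V → R}
    (hsupp : ∀ v, j < β v → x v = 0) (hconst : ∀ u v, β u < j → β v < j → x u = x v)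
    (hsum : ∑ v, x v = 0) :
    G.lapMatrix R *ᵥ x = (#{v | Even (max j (β v))} : R) • x := by
  -- `x` lives on `β ≤ j`, where `max p β` is the constant `p` once `j ≤ p`
  have hweight (p : ℕ) (hp : j ≤ p) : ∑ v with Even (max p (β v)), x v = 0 := by
    rw [sum_filter]
    calc ∑ v, (if Even (max p (β v)) then x v else 0) = ∑ v, if Even p then x v else 0 := by
          refine sum_congr rfl fun v _ => ?_
          rcases le_or_gt (β v) p with hv | hv
          · rw [max_eq_left hv]
          · simp [hsupp v (hp.trans_lt hv)]
      _ = 0 := by split_ifs <;> simp [hsum]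
  ext a
  rw [SimpleGraph.lapMatrix_mulVec_apply_of_adj_iff hG, Pi.smul_apply, smul_eq_mul]
  rcases lt_or_ge j (β a) with ha | ha
  · rw [sum_sub_distrib, hweight _ ha.le, hsupp a ha]
    simp
  · calc ∑ v with Even (max (β a) (β v)), (x a - x v)
          = ∑ v with Even (max j (β v)), (x a - x v) := by
          rw [sum_filter, sum_filter]
          refine sum_congr rfl fun v _ => ?_
          rcases ha.lt_or_eq with ha | rfl
          · by_cases hv : β v < j
            · simp [hconst a v ha hv]
            · rw [max_eq_right (by omega), max_eq_right (by omega)]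
          · rfl
      _ = _ := by rw [sum_sub_distrib, hweight j le_rfl, sum_const, nsmul_eq_mul, sub_zero]

theorem lapMatrix_mul_blockProj {𝕜 : Type*} [Field 𝕜] [CharZero 𝕜]
    (hG : ∀ u v, G.Adj u v ↔ u ≠ v ∧ Even (max (β u) (β v)))
    {j : ℕ} (hj : 1 ≤ j) :
    G.lapMatrix 𝕜 * blockProj β j = (#{v | Even (max j (β v))} : 𝕜) • blockProj β j := by
  ext a b
  exact congr_fun (lapMatrix_mulVec_eq_smul_of_blockwise hG (x := fun c => blockProj β j c b)
    (fun c hc => blockProj_apply_eq_zero_of_lt β hc b)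
    (fun c c' hc hc' => blockProj_apply_eq_of_lt β hc hc' b)
    (sum_blockProj_apply β hj b)) a

theorem exp_smul_lapMatrix_eq_sum (hG : ∀ u v, G.Adj u v ↔ u ≠ v ∧ Even (max (β u) (β v)))
    {r : ℕ} (hβ : ∀ v, β v ∈ Icc 1 r) (c : ℂ) :
    NormedSpace.exp (c • G.lapMatrix ℂ)
      = ∑ j ∈ Icc 1 r, Complex.exp (c * #{v | Even (max j (β v))}) • blockProj β j
        + (Fintype.card V : ℂ)⁻¹ • of (fun _ _ => 1) := by
  -- `exp` only depends on the topology, which every matrix algebra norm induces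
  let _ : NormedRing (Matrix V V ℂ) := Matrix.linftyOpNormedRing
  let _ : NormedAlgebra ℂ (Matrix V V ℂ) := Matrix.linftyOpNormedAlgebra
  have hexp {B : Matrix V V ℂ} {μ : ℂ} (h : G.lapMatrix ℂ * B = μ • B) :
      NormedSpace.exp (c • G.lapMatrix ℂ) * B = Complex.exp (c * μ) • B := by
    rw [Complex.exp_eq_exp_ℂ]
    exact NormedSpace.exp_mul_of_mul_eq_smul (by rw [smul_mul_assoc, h, smul_smul])
  have hones : G.lapMatrix ℂ * of (fun _ _ => 1) = (0 : ℂ) • of (fun _ _ => 1) := by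
    ext a b
    simpa [mul_apply', mulVec] using congr_fun (G.lapMatrix_mulVec_const_eq_zero (R := ℂ)) a
  calc NormedSpace.exp (c • G.lapMatrix ℂ)
      = NormedSpace.exp (c • G.lapMatrix ℂ)
          * (∑ j ∈ Icc 1 r, blockProj β j + (Fintype.card V : ℂ)⁻¹ • of (fun _ _ => 1)) := by
        rw [sum_blockProj_add_smul_ones β hβ, mul_one]
    _ = _ := by
        rw [mul_add, mul_sum, mul_smul_comm, hexp hones, mul_zero, Complex.exp_zero, one_smul]
        congr 1
        exact sum_congr rfl fun j hj => hexp (lapMatrix_mul_blockProj hG (mem_Icc.1 hj).1)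

end Spectral

section Gamma

variable {r k : ℕ} {m : ℕ → ℕ}

theorem sig_mono (m : ℕ → ℕ) : Monotone (sig m) :=
  fun _ _ h => sum_le_sum_of_subset (Icc_subset_Icc_right h)

theorem sig_sub_one_add {j : ℕ} (hj : 1 ≤ j) : sig m (j - 1) + m j = sig m j := by
  obtain ⟨i, rfl⟩ := Nat.exists_eq_add_of_le' hj
  simp [sig, sum_Icc_succ_top]

theorem blk_le_iff {l : ℕ} (hl : l ≤ r) (v : ℕ) : blk r m v ≤ l ↔ v < sig m l := by
  constructor
  · intro h
    by_contra! hv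
    have hsub : Icc 1 l ⊆ {i ∈ Icc 1 r | sig m i ≤ v} := fun i hi => by
      simp only [mem_Icc, mem_filter] at hi ⊢
      exact ⟨⟨hi.1, hi.2.trans hl⟩, (sig_mono m hi.2).trans hv⟩
    have := card_le_card hsub
    simp only [Nat.card_Icc, blk] at this h
    omega
  · intro hv
    have hl0 : l ≠ 0 := by
      rintro rfl
      simp [sig] at hv
    have hsub : {i ∈ Icc 1 r | sig m i ≤ v} ⊆ Icc 1 (l - 1) := fun i hi => by
      simp only [mem_Icc, mem_filter] at hi ⊢
      refine ⟨hi.1.1, Nat.le_sub_one_of_lt (lt_of_not_ge fun hli => ?_)⟩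
      exact (sig_mono m hli).trans hi.2 |>.not_gt hv
    have := card_le_card hsub
    simp only [Nat.card_Icc, blk] at this ⊢
    omega

theorem one_le_blk (v : ℕ) : 1 ≤ blk r m v := Nat.le_add_right 1 _

theorem blk_mem_Icc (v : Fin (sig m r)) : blk r m v ∈ Icc 1 r :=
  mem_Icc.2 ⟨one_le_blk v, (blk_le_iff le_rfl v).2 v.isLt⟩

theorem card_filter_blk_le {l : ℕ} (hl : l ≤ r) :
    #{v : Fin (sig m r) | blk r m v ≤ l} = sig m l := by
  simp_rw [blk_le_iff hl, Fin.card_filter_val_lt]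
  exact min_eq_right (sig_mono m hl)

theorem card_filter_blk_eq {l : ℕ} (hl1 : 1 ≤ l) (hl : l ≤ r) :
    #{v : Fin (sig m r) | blk r m v = l} = m l := by
  have hsplit : ({v : Fin (sig m r) | blk r m v ≤ l} : Finset _)
      = ({v : Fin (sig m r) | blk r m v ≤ l - 1} : Finset _)
        ∪ ({v : Fin (sig m r) | blk r m v = l} : Finset _) := by
    ext v
    simp only [mem_filter, mem_univ, true_and, mem_union]
    omega
  have hcard := congr_arg card hsplit
  rw [card_union_of_disjoint (disjoint_filter.2 fun v _ h => by omega),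
    card_filter_blk_le hl, card_filter_blk_le (by omega), ← sig_sub_one_add hl1] at hcard
  omega

theorem card_filter_blk (P : ℕ → Prop) [DecidablePred P] :
    #{v : Fin (sig m r) | P (blk r m v)} = ∑ l ∈ Icc 1 r with P l, m l := by
  rw [card_eq_sum_card_fiberwise (t := {l ∈ Icc 1 r | P l})
    fun v hv => mem_filter.2 ⟨blk_mem_Icc v, (mem_filter.1 hv).2⟩]
  refine sum_congr rfl fun l hl => ?_
  obtain ⟨hl, hPl⟩ := mem_filter.1 hl
  rw [filter_filter, ← card_filter_blk_eq (m := m) (mem_Icc.1 hl).1 (mem_Icc.1 hl).2]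
  congr 1
  ext v
  simp only [mem_filter, mem_univ, true_and, and_iff_right_iff_imp]
  rintro rfl
  exact hPl

theorem gammaEven_adj_iff (u v : Fin (sig m r)) :
    (GammaEven r m).Adj u v ↔ u ≠ v ∧ Even (max (blk r m u) (blk r m v)) :=
  and_congr_right' Nat.even_iff.symm

theorem projMat_eq_blockProj {j : ℕ} (hj1 : 1 ≤ j) (hj : j ≤ 2 * k) :
    projMat k m j = blockProj (fun v : Fin (sig m (2 * k)) => blk (2 * k) m v) j := by
  ext a b
  rw [blockProj_apply, card_filter_blk_le hj, card_filter_blk_le (by omega)]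
  have htelescope (ha : blk (2 * k) m a < j) :
      (m j : ℂ) / (sig m (j - 1) * sig m j) = 0 - (sig m j : ℂ)⁻¹ + (sig m (j - 1) : ℂ)⁻¹ := by
    have hpos : 0 < sig m (j - 1) :=
      (Nat.zero_le _).trans_lt ((blk_le_iff (by omega) _).1 (Nat.le_sub_one_of_lt ha))
    have hσ : (sig m (j - 1) : ℂ) ≠ 0 := Nat.cast_ne_zero.2 (by omega)
    have hσ' : (sig m (j - 1) + m j : ℂ) ≠ 0 := by
      exact_mod_cast (by omega : sig m (j - 1) + m j ≠ 0)
    rw [← sig_sub_one_add hj1]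
    push_cast
    field_simp
    ring
  by_cases hab : a = b
  · subst hab
    simp only [projMat, of_apply, true_and, and_self, if_true]
    split_ifs <;> first | (exfalso; omega) | exact htelescope (by omega) | ring
  · simp only [projMat, of_apply, hab, false_and, if_false]
    split_ifs <;> first | (exfalso; omega) | exact htelescope (by omega) | ring

theorem projOne_eq_blockProj (hk : 1 ≤ 2 * k) :
    projOne k m = blockProj (fun v : Fin (sig m (2 * k)) => blk (2 * k) m v) 1 := by
  ext a b
  have hsig : sig m 1 = m 1 := by simp [sig]
  rw [blockProj_apply, card_filter_blk_le hk, hsig]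
  have ha : 1 ≤ blk (2 * k) m a := one_le_blk _
  have hb : 1 ≤ blk (2 * k) m b := one_le_blk _
  by_cases hab : a = b
  · subst hab
    simp only [projOne, of_apply, true_and, and_self, if_true]
    split_ifs <;> first | (exfalso; omega) | ring
  · simp only [projOne, of_apply, hab, false_and, if_false]
    split_ifs <;> first | (exfalso; omega) | ring

theorem lam_eq_card {j : ℕ} (hj : j ≤ 2 * k) :
    lam k m j = #{v : Fin (sig m (2 * k)) | Even (max j (blk (2 * k) m v))} := by
  rw [card_filter_blk (P := fun l => Even (max j l))]
  unfold lam
  split_ifs with hodd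
  · rw [lam0]
    congr 1
    ext l
    simp only [mem_filter, mem_Icc, Nat.even_iff]
    rw [Nat.odd_iff] at hodd
    omega
  · rw [lam1, sig, ← sum_union]
    · congr 1
      ext l
      simp only [mem_filter, mem_Icc, mem_union, Nat.even_iff]
      rw [Nat.not_odd_iff] at hodd
      omega
    · rw [disjoint_left]
      intro l hl hl'
      simp only [mem_filter, mem_Icc] at hl hl'
      omega

end Gamma

theorem exp_neg_smul_lapMatrix_eq_general (k : ℕ) (hk : 1 ≤ k) (m : ℕ → ℕ) (t : ℝ) :
    Ut (GammaEven (2 * k) m) t =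
      Complex.exp (-(Complex.I * (t : ℂ)) * (lam0 k m 1 : ℂ)) • projOne k m +
      (∑ j ∈ Finset.Icc 2 (2 * k),
        Complex.exp (-(Complex.I * (t : ℂ)) * (lam k m j : ℂ)) • projMat k m j) +
      ((sig m (2 * k) : ℂ))⁻¹ • (Matrix.of fun _ _ => (1 : ℂ)) := by
  have h2k : 1 ≤ 2 * k := by omega
  have hlam0 : lam0 k m 1 = lam k m 1 := by simp [lam]
  rw [Ut, exp_smul_lapMatrix_eq_sum gammaEven_adj_iff blk_mem_Icc, Fintype.card_fin,
    ← insert_Icc_add_one_left_eq_Icc h2k, sum_insert (by simp), projOne_eq_blockProj h2k, hlam0,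
    lam_eq_card h2k]
  congr 2
  refine sum_congr rfl fun j hj => ?_
  obtain ⟨hj1, hj⟩ := mem_Icc.1 hj
  rw [projMat_eq_blockProj (by omega) hj, lam_eq_card hj]

/-- Spectral decomposition of the evolution: for `G = Γ(m₁,…,m_{2k})`,
`exp(−itL) = e^{−itλ₀(1)} P₁ + Σ_{j=2}^{2k} e^{−itλ(j)} P_j + (1/n) J`. -/
theorem exp_neg_smul_lapMatrix_eq (k : ℕ) (hk : 1 ≤ k) (m : ℕ → ℕ)
    (hm : ∀ i, 1 ≤ i → i ≤ 2 * k → 1 ≤ m i) (hm1 : 2 ≤ m 1) (t : ℝ) :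
    Ut (GammaEven (2 * k) m) t =
      Complex.exp (-(Complex.I * (t : ℂ)) * (lam0 k m 1 : ℂ)) • projOne k m +
      (∑ j ∈ Finset.Icc 2 (2 * k),
        Complex.exp (-(Complex.I * (t : ℂ)) * (lam k m j : ℂ)) • projMat k m j) +
      ((sig m (2 * k) : ℂ))⁻¹ • (Matrix.of fun _ _ => (1 : ℂ)) :=
  exp_neg_smul_lapMatrix_eq_general k hk m t
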